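/- arXiv:math/9904052 — 5 statements merged into one kernel-verified Lean document; each statement's English description precedes it below -/
import Mathlib

section
/- Let C be an X-groupoid and ξ = (p : E → X) a numerable principal G-bundle, with G SIN and X Hausdorff. Then the topology on R(C,ξ) induced by the uniform structure U_R coincides with the compact-open topology (R(C,ξ) regarded as a subspace of the space of continuous maps C ×_X E → E with the compact-open topology). -/
open Set Topology Filter

/-- A topological groupoid over a space `X` ("X-groupoid"): source and target maps,
partially defined continuous composition, continuous units and continuous inversion. -/
structure TopGroupoidOver (X : Type*) (C : Type*) [TopologicalSpace X] [TopologicalSpace C] where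
  src : C → X
  tgt : C → X
  comp : (c₁ : C) → (c₂ : C) → src c₁ = tgt c₂ → C
  unit : X → C
  ginv : C → C
  continuous_src : Continuous src
  continuous_tgt : Continuous tgt
  continuous_comp : Continuous fun q : {q : C × C // src q.1 = tgt q.2} => comp q.1.1 q.1.2 q.2
  continuous_unit : Continuous unit
  continuous_ginv : Continuous ginv
  src_comp : ∀ c₁ c₂ h, src (comp c₁ c₂ h) = src c₂
  tgt_comp : ∀ c₁ c₂ h, tgt (comp c₁ c₂ h) = tgt c₁
  comp_assoc : ∀ c₁ c₂ c₃ (h₁ : src c₁ = tgt c₂) (h₂ : src c₂ = tgt c₃) h₃ h₄,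
    comp (comp c₁ c₂ h₁) c₃ h₃ = comp c₁ (comp c₂ c₃ h₂) h₄
  src_unit : ∀ x, src (unit x) = x
  tgt_unit : ∀ x, tgt (unit x) = x
  comp_unit : ∀ c h, comp c (unit (src c)) h = c
  unit_comp : ∀ c h, comp (unit (tgt c)) c h = c
  src_ginv : ∀ c, src (ginv c) = tgt c
  tgt_ginv : ∀ c, tgt (ginv c) = src c
  comp_ginv : ∀ c h, comp c (ginv c) h = unit (tgt c)
  ginv_comp : ∀ c h, comp (ginv c) c h = unit (src c)

/-- A principal `G`-space over `X`: a continuous map `proj : E → X` with a continuous free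
right `G`-action whose orbits are exactly the fibres of `proj` (i.e. `E/G → X` is bijective). -/
structure PrincipalGSpace (X E G : Type*) [TopologicalSpace X] [TopologicalSpace E]
    [TopologicalSpace G] [Group G] where
  proj : E → X
  smul : E → G → E
  continuous_proj : Continuous proj
  continuous_smul : Continuous fun q : E × G => smul q.1 q.2
  smul_one : ∀ z, smul z 1 = z
  smul_mul : ∀ z g₁ g₂, smul (smul z g₁) g₂ = smul z (g₁ * g₂)
  free : ∀ z g, smul z g = z → g = 1
  proj_smul : ∀ z g, proj (smul z g) = proj z
  proj_surjective : Function.Surjective proj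
  exists_smul_eq : ∀ y z, proj y = proj z → ∃ g : G, smul z g = y

variable {X C E G : Type*} [TopologicalSpace X] [TopologicalSpace C] [TopologicalSpace E]
  [TopologicalSpace G] [Group G]

/-- `ξ` is trivializable over `U ⊆ X`: there is a `G`-equivariant homeomorphism
`proj⁻¹(U) ≃ U × G` over `U`. -/
def PrincipalGSpace.TrivOn (ξ : PrincipalGSpace X E G) (U : Set X) : Prop :=
  ∃ φ : {z : E // ξ.proj z ∈ U} ≃ₜ ↥U × G,
    (∀ z, ((φ z).1 : X) = ξ.proj z.1) ∧
    (∀ z (g : G) (hz : ξ.proj (ξ.smul z.1 g) ∈ U),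
      φ ⟨ξ.smul z.1 g, hz⟩ = ((φ z).1, (φ z).2 * g))

/-- `ξ` is a (locally trivial) principal `G`-bundle. -/
def PrincipalGSpace.IsBundle (ξ : PrincipalGSpace X E G) : Prop :=
  ∀ x : X, ∃ U : Set X, IsOpen U ∧ x ∈ U ∧ ξ.TrivOn U

/-- `ξ` is numerable: some trivializing open cover admits a subordinate partition of unity. -/
def PrincipalGSpace.Numerable (ξ : PrincipalGSpace X E G) : Prop :=
  ∃ (ι : Type) (U : ι → Set X) (pou : PartitionOfUnity ι X univ),
    (∀ i, IsOpen (U i) ∧ ξ.TrivOn (U i)) ∧ (⋃ i, U i) = univ ∧ pou.IsSubordinate U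

/-- A representation of the `X`-groupoid `gpd` on the principal `G`-space `ξ`. -/
structure GroupoidRep (gpd : TopGroupoidOver X C) (ξ : PrincipalGSpace X E G) where
  w : (c : C) → (z : E) → gpd.src c = ξ.proj z → E
  continuous_w : Continuous fun q : {q : C × E // gpd.src q.1 = ξ.proj q.2} => w q.1.1 q.1.2 q.2
  proj_w : ∀ c z h, ξ.proj (w c z h) = gpd.tgt c
  w_comp : ∀ c d z (hcd : gpd.src c = gpd.tgt d) (hdz : gpd.src d = ξ.proj z) h₁ h₂,
    w (gpd.comp c d hcd) z h₁ = w c (w d z hdz) h₂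
  w_ginv : ∀ c z (h : gpd.src c = ξ.proj z) h', w (gpd.ginv c) (w c z h) h' = z
  w_smul : ∀ c z g (h : gpd.src c = ξ.proj z) h', w c (ξ.smul z g) h' = ξ.smul (w c z h) g

/-- A `C`-contraction: a continuous map `ρ : U → C` on an open set `U ⊆ X`
with `α(ρ(x)) = x` and `β(ρ(x)) = x₀`. -/
structure GpdContraction (gpd : TopGroupoidOver X C) (x₀ : X) where
  U : Set X
  isOpen : IsOpen U
  map : U → C
  continuous_map : Continuous map
  src_map : ∀ x : U, gpd.src (map x) = x
  tgt_map : ∀ x : U, gpd.tgt (map x) = x₀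

/-- The groupoid is locally trivial: the domains of the `C`-contractions cover `X`. -/
def TopGroupoidOver.LocTrivial (gpd : TopGroupoidOver X C) (x₀ : X) : Prop :=
  ∀ x : X, ∃ κ : GpdContraction gpd x₀, x ∈ κ.U

/-- A locally trivial numerable groupoid: the cover by domains of the `C`-contractions
admits a subordinate partition of unity. -/
def TopGroupoidOver.LocTrivNumerable (gpd : TopGroupoidOver X C) (x₀ : X) : Prop :=
  gpd.LocTrivial x₀ ∧
  ∃ pou : PartitionOfUnity (GpdContraction gpd x₀) X univ,
    pou.IsSubordinate fun κ => κ.U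

/-- The group `Ω_C = C_*^*` of loops of the groupoid at the basepoint `x₀`. -/
def OmegaGp (gpd : TopGroupoidOver X C) (x₀ : X) :=
  {c : C // gpd.src c = x₀ ∧ gpd.tgt c = x₀}

instance (gpd : TopGroupoidOver X C) (x₀ : X) : TopologicalSpace (OmegaGp gpd x₀) :=
  instTopologicalSpaceSubtype

instance (gpd : TopGroupoidOver X C) (x₀ : X) : Group (OmegaGp gpd x₀) where
  mul a b := ⟨gpd.comp a.1 b.1 (a.2.1.trans b.2.2.symm),
    (gpd.src_comp _ _ _).trans b.2.1, (gpd.tgt_comp _ _ _).trans a.2.2⟩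
  one := ⟨gpd.unit x₀, gpd.src_unit x₀, gpd.tgt_unit x₀⟩
  inv a := ⟨gpd.ginv a.1, (gpd.src_ginv _).trans a.2.2, (gpd.tgt_ginv _).trans a.2.1⟩
  mul_assoc a b c := Subtype.ext (gpd.comp_assoc a.1 b.1 c.1 _ _ _ _)
  one_mul := by
    rintro ⟨c, hs, ht⟩
    apply Subtype.ext
    show gpd.comp (gpd.unit x₀) c _ = c
    subst ht
    exact gpd.unit_comp c _
  mul_one := by
    rintro ⟨c, hs, ht⟩
    apply Subtype.ext
    show gpd.comp c (gpd.unit x₀) _ = c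
    subst hs
    exact gpd.comp_unit c _
  inv_mul_cancel := by
    rintro ⟨c, hs, ht⟩
    apply Subtype.ext
    show gpd.comp (gpd.ginv c) c _ = gpd.unit x₀
    subst hs
    exact gpd.ginv_comp c _

/-- A gauge transformation of `ξ`: a `G`-equivariant self-homeomorphism of `E` over `id_X`. -/
def IsGaugeHomeo (ξ : PrincipalGSpace X E G) (χ : E ≃ₜ E) : Prop :=
  (∀ z, ξ.proj (χ z) = ξ.proj z) ∧ ∀ z g, χ (ξ.smul z g) = ξ.smul (χ z) g

/-- The gauge group of `ξ`. -/
def GaugeGp (ξ : PrincipalGSpace X E G) := {χ : E ≃ₜ E // IsGaugeHomeo ξ χ}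

def GaugeGp.id (ξ : PrincipalGSpace X E G) : GaugeGp ξ :=
  ⟨Homeomorph.refl E, fun _ => rfl, fun _ _ => rfl⟩

/-- Composition of gauge transformations: `(GaugeGp.mul χ ψ) z = χ (ψ z)`. -/
def GaugeGp.mul {ξ : PrincipalGSpace X E G} (χ ψ : GaugeGp ξ) : GaugeGp ξ :=
  ⟨ψ.1.trans χ.1, fun z => (χ.2.1 (ψ.1 z)).trans (ψ.2.1 z), fun z g => by
    simp only [Homeomorph.trans_apply, ψ.2.2 z g, χ.2.2 (ψ.1 z) g]⟩

/-- Inversion of gauge transformations. -/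
def GaugeGp.inv {ξ : PrincipalGSpace X E G} (χ : GaugeGp ξ) : GaugeGp ξ :=
  ⟨χ.1.symm, fun z => by
      conv_rhs => rw [← χ.1.apply_symm_apply z]
      exact (χ.2.1 (χ.1.symm z)).symm,
    fun z g => χ.1.injective (by rw [χ.1.apply_symm_apply, χ.2.2, χ.1.apply_symm_apply])⟩

/-- A symmetric open neighbourhood of the identity of `G`. -/
def SymmNhd {G : Type*} [TopologicalSpace G] [Group G] (V : Set G) : Prop :=
  IsOpen V ∧ (1 : G) ∈ V ∧ ∀ v ∈ V, v⁻¹ ∈ V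

/-- A topological group is SIN if the identity admits a fundamental system of
conjugation-invariant neighbourhoods. -/
def IsSIN (G : Type*) [TopologicalSpace G] [Group G] : Prop :=
  ∀ U ∈ 𝓝 (1 : G), ∃ V ∈ 𝓝 (1 : G), V ⊆ U ∧ ∀ g ∈ V, ∀ h : G, h * g * h⁻¹ ∈ V

/-- The basic entourage `O^𝒢(K,V)` on the gauge group: pairs `(χ, χ̃)` such that
`γ(χ(z), χ̃(z)) ∈ V` for all `z` over `K`, i.e. `χ(z) = χ̃(z)·v` for some `v ∈ V`. -/
def gaugeEnt (ξ : PrincipalGSpace X E G) (K : Set X) (V : Set G) :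
    Set (GaugeGp ξ × GaugeGp ξ) :=
  {p | ∀ z : E, ξ.proj z ∈ K → ∃ v ∈ V, p.1.1 z = ξ.smul (p.2.1 z) v}

/-- The basic entourage `O^R(L,V)` on the set of representations. -/
def repEnt (gpd : TopGroupoidOver X C) (ξ : PrincipalGSpace X E G) (L : Set C) (V : Set G) :
    Set (GroupoidRep gpd ξ × GroupoidRep gpd ξ) :=
  {p | ∀ c ∈ L, ∀ z (h : gpd.src c = ξ.proj z), ∃ v ∈ V, p.1.w c z h = ξ.smul (p.2.w c z h) v}

/-- The basic entourage `{(g̃,g) : g̃ g⁻¹ ∈ V}` of the canonical uniformity of `G`. -/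
def grpEnt (G : Type*) [TopologicalSpace G] [Group G] (V : Set G) : Set (G × G) :=
  {p | p.1 * p.2⁻¹ ∈ V}

/-- The compact-open topology on the gauge group (as subspace of `C(E,E)`). -/
def gaugeCO (ξ : PrincipalGSpace X E G) : TopologicalSpace (GaugeGp ξ) :=
  TopologicalSpace.induced (fun χ : GaugeGp ξ => (⟨χ.1, χ.1.continuous⟩ : C(E, E)))
    inferInstance

/-- The compact-open topology on the set of representations
(as subspace of `C(C ×_X E, E)`). -/
def repCO (gpd : TopGroupoidOver X C) (ξ : PrincipalGSpace X E G) :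
    TopologicalSpace (GroupoidRep gpd ξ) :=
  TopologicalSpace.induced
    (fun w : GroupoidRep gpd ξ =>
      (⟨fun q => w.w q.1.1 q.1.2 q.2, w.continuous_w⟩ :
        C({q : C × E // gpd.src q.1 = ξ.proj q.2}, E))) inferInstance

/-- A space is semilocally contractible if every point has a neighbourhood whose
inclusion is homotopic to a constant map. -/
def SemiLocallyContractible (Z : Type*) [TopologicalSpace Z] : Prop :=
  ∀ z : Z, ∃ U ∈ 𝓝 z, ∃ z' : Z,
    (⟨Subtype.val, continuous_subtype_val⟩ : C(U, Z)).Homotopic (ContinuousMap.const U z')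

/-- A continuous invariant map `q : P → Q` with a continuous right `H`-action on `P`
is a principal `H`-bundle: each point of `Q` has an open neighbourhood `T` with an
`H`-equivariant homeomorphism `q⁻¹(T) ≃ T × H` over `T`. -/
def IsPrincipalHBundle {P Q H : Type*} [TopologicalSpace P] [TopologicalSpace Q]
    [TopologicalSpace H] (q : P → Q) (act : P → H → P) (hmul : H → H → H) : Prop :=
  Continuous q ∧ Continuous (fun s : P × H => act s.1 s.2) ∧
  (∀ p h, q (act p h) = q p) ∧
  ∀ y : Q, ∃ T : Set Q, IsOpen T ∧ y ∈ T ∧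
    ∃ φ : {p : P // q p ∈ T} ≃ₜ ↥T × H,
      (∀ p, ((φ p).1 : Q) = q p.1) ∧
      ∀ p (h : H) (hm : q (act p.1 h) ∈ T), φ ⟨act p.1 h, hm⟩ = ((φ p).1, hmul (φ p).2 h)

section Aux

variable {X C E G : Type*} [TopologicalSpace X] [TopologicalSpace C] [TopologicalSpace E]
  [TopologicalSpace G] [Group G]

/-- Data extracted from a trivialization: a continuous section and a continuous
"second coordinate" map with a division property. -/
lemma PrincipalGSpace.TrivOn.exists_data {ξ : PrincipalGSpace X E G} {U : Set X}
    (h : ξ.TrivOn U) :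
    ∃ (s : ↥U → E) (ψ : {z : E // ξ.proj z ∈ U} → G),
      Continuous s ∧ Continuous ψ ∧ (∀ x : ↥U, ξ.proj (s x) = x) ∧
      ∀ (y y' : E) (hy : ξ.proj y ∈ U) (hy' : ξ.proj y' ∈ U), ξ.proj y = ξ.proj y' →
        y = ξ.smul y' ((ψ ⟨y', hy'⟩)⁻¹ * ψ ⟨y, hy⟩) := by
  obtain ⟨φ, hφ1, hφ2⟩ := h
  refine ⟨fun x => (φ.symm (x, 1)).1, fun z => (φ z).2, ?_, ?_, ?_, ?_⟩
  · exact continuous_subtype_val.comp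
      (φ.symm.continuous.comp (continuous_id.prodMk continuous_const))
  · exact continuous_snd.comp φ.continuous
  · intro x
    have h1 := hφ1 (φ.symm (x, 1))
    rw [φ.apply_symm_apply] at h1
    exact h1.symm
  · intro y y' hy hy' hproj
    set k := (φ ⟨y', hy'⟩).2⁻¹ * (φ ⟨y, hy⟩).2 with hk
    have hz : ξ.proj (ξ.smul y' k) ∈ U := by rw [ξ.proj_smul]; exact hy'
    have h2 := hφ2 ⟨y', hy'⟩ k hz
    have hfst : (φ ⟨y', hy'⟩).1 = (φ ⟨y, hy⟩).1 := by
      apply Subtype.ext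
      rw [hφ1, hφ1]
      exact hproj.symm
    have h3 : φ ⟨ξ.smul y' k, hz⟩ = φ ⟨y, hy⟩ := by
      rw [h2, hfst, hk, mul_inv_cancel_left]
    have h4 := φ.injective h3
    have h5 : ξ.smul y' k = y := congrArg Subtype.val h4
    exact h5.symm

/-- In a topological group, a point of the closure of `s` lies in `s * V` for any
symmetric open neighbourhood `V` of `1`. -/
lemma closure_subset_mul_aux [IsTopologicalGroup G] {s V : Set G} (hVo : IsOpen V)
    (h1 : (1 : G) ∈ V) (hsymm : ∀ v ∈ V, v⁻¹ ∈ V) {x : G} (hx : x ∈ closure s) :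
    ∃ y ∈ s, ∃ v ∈ V, x = y * v := by
  have hN : IsOpen ((fun w => x⁻¹ * w) ⁻¹' V) :=
    hVo.preimage (continuous_const.mul continuous_id)
  have hxN : x ∈ (fun w => x⁻¹ * w) ⁻¹' V := by simp [h1]
  obtain ⟨z, hzN, hzs⟩ := mem_closure_iff.mp hx _ hN hxN
  refine ⟨z, hzs, (x⁻¹ * z)⁻¹, hsymm _ hzN, by group⟩

end Aux
/-- Key construction: over a compact set `T` of arrows whose sources lie in a trivializing
open `U` and whose targets lie in a trivializing open `U'`, there is a finite family of
(compact, open) constraint pairs that pins down any representation near `w₀` up to `V'`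
at one chosen point of each relevant fibre. -/
lemma key_lemma {X C E G : Type*} [TopologicalSpace X] [TopologicalSpace C]
    [TopologicalSpace E] [TopologicalSpace G] [Group G] [IsTopologicalGroup G]
    (gpd : TopGroupoidOver X C) (ξ : PrincipalGSpace X E G) (w₀ : GroupoidRep gpd ξ)
    {T : Set C} (hT : IsCompact T) {U U' : Set X} (hU'o : IsOpen U')
    (hU : ξ.TrivOn U) (hU' : ξ.TrivOn U')
    (hTU : ∀ c ∈ T, gpd.src c ∈ U) (hTU' : ∀ c ∈ T, gpd.tgt c ∈ U')
    {V₁ V₂ V' : Set G} (hV₁o : IsOpen V₁)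
    (hV₁V' : ∀ a ∈ V₁, ∀ b ∈ V₁, a⁻¹ * b ∈ V')
    (hV₂o : IsOpen V₂) (h1V₂ : (1 : G) ∈ V₂) (hV₂symm : ∀ v ∈ V₂, v⁻¹ ∈ V₂)
    (hV₂V₁ : ∀ a ∈ V₂, ∀ b ∈ V₂, a * b ∈ V₁) :
    ∃ PS : Set (Set {q : C × E // gpd.src q.1 = ξ.proj q.2} × Set E), PS.Finite ∧
      (∀ p ∈ PS, IsCompact p.1 ∧ IsOpen p.2 ∧
        ∀ q ∈ p.1, w₀.w q.1.1 q.1.2 q.2 ∈ p.2) ∧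
      ∀ c ∈ T, ∃ (z₀ : E) (h₀ : gpd.src c = ξ.proj z₀),
        ∀ e : {q : C × E // gpd.src q.1 = ξ.proj q.2} → E,
          (∀ p ∈ PS, ∀ q ∈ p.1, e q ∈ p.2) →
          ξ.proj (e ⟨(c, z₀), h₀⟩) = gpd.tgt c →
          ∃ v ∈ V', w₀.w c z₀ h₀ = ξ.smul (e ⟨(c, z₀), h₀⟩) v := by
  classical
  obtain ⟨s, ψ, hsc, hψc, hsp, _⟩ := hU.exists_data
  obtain ⟨s', ψ', hs'c, hψ'c, hs'p, hdiv'⟩ := hU'.exists_data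
  haveI : CompactSpace ↥T := isCompact_iff_compactSpace.mp hT
  -- the chosen point in each fibre
  set μ : ↥T → {q : C × E // gpd.src q.1 = ξ.proj q.2} :=
    fun t => ⟨(t.1, s ⟨gpd.src t.1, hTU t.1 t.2⟩), (hsp ⟨gpd.src t.1, hTU t.1 t.2⟩).symm⟩ with hμ
  have hμc : Continuous μ := by
    apply Continuous.subtype_mk
    exact continuous_subtype_val.prodMk
      (hsc.comp ((gpd.continuous_src.comp continuous_subtype_val).subtype_mk _))
  set e₀ : {q : C × E // gpd.src q.1 = ξ.proj q.2} → E :=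
    fun q => w₀.w q.1.1 q.1.2 q.2 with he₀def
  have he₀c : Continuous e₀ := w₀.continuous_w
  have hproje₀ : ∀ q, ξ.proj (e₀ q) = gpd.tgt q.1.1 := fun q => w₀.proj_w _ _ _
  have hmem' : ∀ t : ↥T, ξ.proj (e₀ (μ t)) ∈ U' := fun t => by
    rw [hproje₀]; exact hTU' t.1 t.2
  set ρ : ↥T → G := fun t => ψ' ⟨e₀ (μ t), hmem' t⟩ with hρ
  have hρc : Continuous ρ := hψ'c.comp ((he₀c.comp hμc).subtype_mk _)
  have hrange : IsCompact (Set.range ρ) := isCompact_range hρc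
  have hcover : Set.range ρ ⊆ ⋃ g : G, (fun x => g⁻¹ * x) ⁻¹' V₂ := by
    intro y _
    exact mem_iUnion.2 ⟨y, by simp [h1V₂]⟩
  obtain ⟨tg, htg⟩ := hrange.elim_finite_subcover (fun g => (fun x => g⁻¹ * x) ⁻¹' V₂)
    (fun g => hV₂o.preimage (continuous_const.mul continuous_id)) hcover
  -- constraint pairs
  set P : G → Set {q : C × E // gpd.src q.1 = ξ.proj q.2} :=
    fun g => μ '' (ρ ⁻¹' ((fun x => g⁻¹ * x) ⁻¹' closure V₂)) with hP
  set S : G → Set E := fun g => {y | ∃ hy : ξ.proj y ∈ U', g⁻¹ * ψ' ⟨y, hy⟩ ∈ V₁} with hS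
  have hSopen : ∀ g, IsOpen (S g) := by
    intro g
    have himg : S g = Subtype.val ''
        ((fun z : {z : E // ξ.proj z ∈ U'} => g⁻¹ * ψ' z) ⁻¹' V₁) := by
      ext y
      constructor
      · rintro ⟨hy, hmem⟩
        exact ⟨⟨y, hy⟩, hmem, rfl⟩
      · rintro ⟨⟨y', hy'⟩, hmem, rfl⟩
        exact ⟨hy', hmem⟩
    rw [himg]
    exact (hU'o.preimage ξ.continuous_proj).isOpenMap_subtype_val _
      (hV₁o.preimage ((continuous_const.mul continuous_id).comp hψ'c))
  have hV₂V₁' : V₂ ⊆ V₁ := fun v hv => by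
    have := hV₂V₁ v hv 1 h1V₂; rwa [mul_one] at this
  have hclV₂ : closure V₂ ⊆ V₁ := by
    intro x hx
    obtain ⟨y, hy, v, hv, rfl⟩ := closure_subset_mul_aux hV₂o h1V₂ hV₂symm hx
    exact hV₂V₁ y hy v hv
  refine ⟨(fun g => (P g, S g)) '' ↑tg, (tg.finite_toSet.image _), ?_, ?_⟩
  · rintro p ⟨g, hg, rfl⟩
    refine ⟨?_, hSopen g, ?_⟩
    · exact (((isClosed_closure.preimage (continuous_const.mul continuous_id)).preimage
        hρc).isCompact).image hμc
    · rintro q ⟨t, ht, rfl⟩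
      refine ⟨hmem' t, ?_⟩
      exact hclV₂ ht
  · intro c hc
    set t : ↥T := ⟨c, hc⟩ with htdef
    refine ⟨s ⟨gpd.src c, hTU c hc⟩, (hsp ⟨gpd.src c, hTU c hc⟩).symm, ?_⟩
    intro e he heproj
    have hq : (⟨(c, s ⟨gpd.src c, hTU c hc⟩), (hsp ⟨gpd.src c, hTU c hc⟩).symm⟩ :
        {q : C × E // gpd.src q.1 = ξ.proj q.2}) = μ t := rfl
    -- find the coset containing ρ t
    have hmemcover := htg (Set.mem_range_self t)
    rw [Set.mem_iUnion₂] at hmemcover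
    obtain ⟨g, hgtg, hgmem⟩ := hmemcover
    -- μ t ∈ P g
    have hμtP : μ t ∈ P g := ⟨t, subset_closure hgmem, rfl⟩
    have heS : e (μ t) ∈ S g := he _ ⟨g, hgtg, rfl⟩ _ hμtP
    obtain ⟨heU', heV₁⟩ := heS
    have hprojeq : ξ.proj (e₀ (μ t)) = ξ.proj (e (μ t)) := by
      rw [hproje₀]; exact heproj.symm
    have hdiv := hdiv' (e₀ (μ t)) (e (μ t)) (hmem' t) heU' hprojeq
    refine ⟨(ψ' ⟨e (μ t), heU'⟩)⁻¹ * ψ' ⟨e₀ (μ t), hmem' t⟩, ?_, ?_⟩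
    · -- membership in V'
      have hb : g⁻¹ * ψ' ⟨e₀ (μ t), hmem' t⟩ ∈ V₁ := hV₂V₁' hgmem
      have := hV₁V' _ heV₁ _ hb
      have halg : (g⁻¹ * ψ' ⟨e (μ t), heU'⟩)⁻¹ * (g⁻¹ * ψ' ⟨e₀ (μ t), hmem' t⟩)
          = (ψ' ⟨e (μ t), heU'⟩)⁻¹ * ψ' ⟨e₀ (μ t), hmem' t⟩ := by group
      rwa [halg] at this
    · exact hdiv
/-- **Proposition (compou), representation-space case**. For an `X`-groupoid `C` and a
numerable principal `G`-bundle `ξ` with `G` SIN and `X` Hausdorff, the topology induced on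
`R(C,ξ)` by the uniform structure `U_R` coincides with the compact-open topology. -/
theorem statement10 {X C E G : Type*} [TopologicalSpace X] [TopologicalSpace C]
    [TopologicalSpace E] [TopologicalSpace G] [Group G] [IsTopologicalGroup G] [T2Space X]
    (gpd : TopGroupoidOver X C) (ξ : PrincipalGSpace X E G)
    (hbdl : ξ.IsBundle) (hnum : ξ.Numerable) (hSIN : IsSIN G) :
    ∀ 𝔘 : UniformSpace (GroupoidRep gpd ξ),
      (@uniformity _ 𝔘).HasBasis
        (fun s : Set C × Set G => IsCompact s.1 ∧ SymmNhd s.2)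
        (fun s => repEnt gpd ξ s.1 s.2) →
      𝔘.toTopologicalSpace = repCO gpd ξ := by
  intro 𝔘 hB
  letI := 𝔘
  classical
  set ι : GroupoidRep gpd ξ → C({q : C × E // gpd.src q.1 = ξ.proj q.2}, E) :=
    fun w => ⟨fun q => w.w q.1.1 q.1.2 q.2, w.continuous_w⟩ with hι
  have hnhds : ∀ w₀ : GroupoidRep gpd ξ,
      @nhds _ (repCO gpd ξ) w₀ = Filter.comap ι (nhds (ι w₀)) := fun w₀ => nhds_induced ι w₀
  refine TopologicalSpace.ext_nhds fun w₀ => le_antisymm ?_ ?_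
  · -- uniform neighbourhoods are finer than compact-open neighbourhoods
    rw [hnhds w₀, ← Filter.tendsto_iff_comap, ContinuousMap.tendsto_nhds_compactOpen]
    intro K hK S hS hmaps
    set F : {q : C × E // gpd.src q.1 = ξ.proj q.2} × G → E :=
      fun sp => ξ.smul (w₀.w sp.1.1.1 sp.1.1.2 sp.1.2) sp.2 with hF
    have hFc : Continuous F :=
      ξ.continuous_smul.comp ((w₀.continuous_w.comp continuous_fst).prodMk continuous_snd)
    have hsub : K ×ˢ ({1} : Set G) ⊆ F ⁻¹' S := by
      rintro ⟨q, g⟩ ⟨hq, hg⟩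
      simp only [Set.mem_singleton_iff] at hg
      subst hg
      have : F (q, 1) = w₀.w q.1.1 q.1.2 q.2 := ξ.smul_one _
      rw [Set.mem_preimage, this]
      exact hmaps hq
    obtain ⟨u, v, hu, hv, hKu, h1v, huv⟩ :=
      generalized_tube_lemma hK isCompact_singleton (hS.preimage hFc) hsub
    have h1v' : (1 : G) ∈ v := h1v rfl
    refine (Filter.HasBasis.eventually_iff (nhds_basis_uniformity' hB)).mpr ?_
    refine ⟨((fun q : {q : C × E // gpd.src q.1 = ξ.proj q.2} => q.1.1) '' K,
        v ∩ {g | g⁻¹ ∈ v}),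
      ⟨hK.image (continuous_fst.comp continuous_subtype_val),
        hv.inter (hv.preimage continuous_inv), ⟨h1v', by simpa using h1v'⟩,
        fun a ha => ⟨ha.2, by simpa using ha.1⟩⟩, ?_⟩
    intro w hw q hq
    obtain ⟨v', hv'V, heq⟩ := hw q.1.1 ⟨q, hq, rfl⟩ q.1.2 q.2
    have h2 : w.w q.1.1 q.1.2 q.2 = ξ.smul (w₀.w q.1.1 q.1.2 q.2) v'⁻¹ := by
      rw [heq, ξ.smul_mul, mul_inv_cancel, ξ.smul_one]
    show w.w q.1.1 q.1.2 q.2 ∈ S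
    rw [h2]
    exact huv (Set.mk_mem_prod (hKu hq) hv'V.2)
  · -- compact-open neighbourhoods are finer than uniform neighbourhoods
    refine (Filter.HasBasis.ge_iff (nhds_basis_uniformity' hB)).mpr ?_
    rintro ⟨L, V⟩ ⟨hL, hVo, h1V, hVsymm⟩
    -- neighbourhoods of 1 in G
    obtain ⟨V'', hV''mem, hV''sub, hV''conj⟩ := hSIN V (hVo.mem_nhds h1V)
    obtain ⟨V₁', hV₁'o, h1V₁', hV₁'mul⟩ := exists_open_nhds_one_mul_subset hV''mem
    set V₁ : Set G := V₁' ∩ {g | g⁻¹ ∈ V₁'} with hV₁def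
    have hV₁o : IsOpen V₁ := hV₁'o.inter (hV₁'o.preimage continuous_inv)
    have h1V₁ : (1 : G) ∈ V₁ := ⟨h1V₁', by simpa using h1V₁'⟩
    have hV₁V'' : ∀ a ∈ V₁, ∀ b ∈ V₁, a⁻¹ * b ∈ V'' := fun a ha b hb =>
      hV₁'mul (Set.mul_mem_mul ha.2 hb.1)
    obtain ⟨V₂', hV₂'o, h1V₂', hV₂'mul⟩ :=
      exists_open_nhds_one_mul_subset (hV₁o.mem_nhds h1V₁)
    set V₂ : Set G := V₂' ∩ {g | g⁻¹ ∈ V₂'} with hV₂def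
    have hV₂o : IsOpen V₂ := hV₂'o.inter (hV₂'o.preimage continuous_inv)
    have h1V₂ : (1 : G) ∈ V₂ := ⟨h1V₂', by simpa using h1V₂'⟩
    have hV₂symm : ∀ g ∈ V₂, g⁻¹ ∈ V₂ := fun g hg => ⟨hg.2, by simpa using hg.1⟩
    have hV₂V₁ : ∀ a ∈ V₂, ∀ b ∈ V₂, a * b ∈ V₁ := fun a ha b hb =>
      hV₂'mul (Set.mul_mem_mul ha.1 hb.1)
    -- compact covers of the source and target images
    choose Uo hUoOpen hUoMem hUoTriv using hbdl
    have hA : IsCompact (gpd.src '' L) := hL.image gpd.continuous_src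
    have hB' : IsCompact (gpd.tgt '' L) := hL.image gpd.continuous_tgt
    obtain ⟨tI, htI⟩ := hA.elim_finite_subcover Uo hUoOpen
      (fun a _ => Set.mem_iUnion.2 ⟨a, hUoMem a⟩)
    obtain ⟨KA, hKAcomp, hKAsub, hKAcover⟩ :=
      hA.finite_compact_cover tI Uo (fun i _ => hUoOpen i) htI
    obtain ⟨tJ, htJ⟩ := hB'.elim_finite_subcover Uo hUoOpen
      (fun a _ => Set.mem_iUnion.2 ⟨a, hUoMem a⟩)
    obtain ⟨KB, hKBcomp, hKBsub, hKBcover⟩ :=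
      hB'.finite_compact_cover tJ Uo (fun i _ => hUoOpen i) htJ
    -- apply the key construction on each piece
    have hkey : ∀ i j : X, ∃ PS :
        Set (Set {q : C × E // gpd.src q.1 = ξ.proj q.2} × Set E), PS.Finite ∧
        (∀ p ∈ PS, IsCompact p.1 ∧ IsOpen p.2 ∧
          ∀ q ∈ p.1, w₀.w q.1.1 q.1.2 q.2 ∈ p.2) ∧
        ∀ c ∈ L ∩ (gpd.src ⁻¹' KA i ∩ gpd.tgt ⁻¹' KB j),
          ∃ (z₀ : E) (h₀ : gpd.src c = ξ.proj z₀),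
          ∀ e : {q : C × E // gpd.src q.1 = ξ.proj q.2} → E,
            (∀ p ∈ PS, ∀ q ∈ p.1, e q ∈ p.2) →
            ξ.proj (e ⟨(c, z₀), h₀⟩) = gpd.tgt c →
            ∃ v ∈ V'', w₀.w c z₀ h₀ = ξ.smul (e ⟨(c, z₀), h₀⟩) v := by
      intro i j
      refine key_lemma gpd ξ w₀ ?_ (hUoOpen j) (hUoTriv i) (hUoTriv j) ?_ ?_
        hV₁o hV₁V'' hV₂o h1V₂ hV₂symm hV₂V₁
      · exact hL.inter_right (((hKAcomp i).isClosed.preimage gpd.continuous_src).inter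
          ((hKBcomp j).isClosed.preimage gpd.continuous_tgt))
      · exact fun c hc => hKAsub i hc.2.1
      · exact fun c hc => hKBsub j hc.2.2
    choose PS hPSfin hPSprop hPSkey using hkey
    set Ptot : Set (Set {q : C × E // gpd.src q.1 = ξ.proj q.2} × Set E) :=
      ⋃ i ∈ tI, ⋃ j ∈ tJ, PS i j with hPtot
    have hPtotfin : Ptot.Finite :=
      tI.finite_toSet.biUnion fun i _ => tJ.finite_toSet.biUnion fun j _ => hPSfin i j
    have hPtotprop : ∀ p ∈ Ptot, IsCompact p.1 ∧ IsOpen p.2 ∧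
        ∀ q ∈ p.1, w₀.w q.1.1 q.1.2 q.2 ∈ p.2 := by
      intro p hp
      simp only [Ptot, Set.mem_iUnion] at hp
      obtain ⟨i, _, j, _, hp⟩ := hp
      exact hPSprop i j p hp
    set M : Set (C({q : C × E // gpd.src q.1 = ξ.proj q.2}, E)) :=
      ⋂ p ∈ Ptot, {f | Set.MapsTo f p.1 p.2} with hM
    have hMopen : IsOpen M := hPtotfin.isOpen_biInter fun p hp =>
      ContinuousMap.isOpen_setOf_mapsTo (hPtotprop p hp).1 (hPtotprop p hp).2.1
    have hMmem : ι w₀ ∈ M := Set.mem_iInter₂.2 fun p hp q hq => (hPtotprop p hp).2.2 q hq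
    rw [hnhds w₀]
    refine Filter.mem_comap.2 ⟨M, hMopen.mem_nhds hMmem, ?_⟩
    intro w hw
    show (w₀, w) ∈ repEnt gpd ξ L V
    intro c hc z h
    have hcA : gpd.src c ∈ ⋃ i ∈ tI, KA i := hKAcover ▸ Set.mem_image_of_mem _ hc
    have hcB : gpd.tgt c ∈ ⋃ j ∈ tJ, KB j := hKBcover ▸ Set.mem_image_of_mem _ hc
    rw [Set.mem_iUnion₂] at hcA hcB
    obtain ⟨i, hitI, hciKA⟩ := hcA
    obtain ⟨j, hjtJ, hcjKB⟩ := hcB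
    obtain ⟨z₀, h₀, hkey'⟩ := hPSkey i j c ⟨hc, hciKA, hcjKB⟩
    have hmaps : ∀ p ∈ PS i j, ∀ q ∈ p.1, w.w q.1.1 q.1.2 q.2 ∈ p.2 := by
      intro p hp q hq
      have hpPtot : p ∈ Ptot := by
        simp only [Ptot, Set.mem_iUnion]
        exact ⟨i, hitI, j, hjtJ, hp⟩
      have := Set.mem_iInter₂.1 hw p hpPtot
      exact this hq
    obtain ⟨v, hvV'', heq⟩ := hkey' (fun q => w.w q.1.1 q.1.2 q.2) hmaps (w.proj_w c z₀ h₀)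
    obtain ⟨g, hg⟩ := ξ.exists_smul_eq z z₀ (h.symm.trans h₀)
    subst hg
    have hconj : g⁻¹ * v * g ∈ V := by
      have := hV''conj v hvV'' g⁻¹
      rw [inv_inv] at this
      exact hV''sub this
    refine ⟨g⁻¹ * v * g, hconj, ?_⟩
    rw [w₀.w_smul c z₀ g h₀ h, w.w_smul c z₀ g h₀ h, heq, ξ.smul_mul, ξ.smul_mul]
    congr 1
    group
end

section
/- Let C be a locally trivial X-groupoid and ξ = (p : E → X) a principal G-bundle pointed by ̃* ∈ p⁻¹(*). Then the subgroup 𝒢₁ of the gauge group acts freely on R(C,ξ): if χ ∈ 𝒢₁, w ∈ R(C,ξ) and w^χ = w, then χ = id_E. -/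
open Set Topology Filter

variable {X C E G : Type*} [TopologicalSpace X] [TopologicalSpace C] [TopologicalSpace E]
  [TopologicalSpace G] [Group G]

/-- **(L:g1lib)**. For a locally trivial `X`-groupoid `C` and a pointed principal
`G`-bundle `ξ`, the pointed gauge group `𝒢₁` acts freely on `R(C,ξ)`: if `χ( ̃*) = ̃*` and
`w^χ = w` then `χ = id_E`. -/
theorem statement14 {X C E G : Type*} [TopologicalSpace X] [TopologicalSpace C]
    [TopologicalSpace E] [TopologicalSpace G] [Group G] [IsTopologicalGroup G]
    (gpd : TopGroupoidOver X C) (x₀ : X) (hloc : gpd.LocTrivial x₀)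
    (ξ : PrincipalGSpace X E G) (hbdl : ξ.IsBundle)
    (e₀ : E) (he₀ : ξ.proj e₀ = x₀)
    (w : GroupoidRep gpd ξ) (χ : GaugeGp ξ)
    (hχ1 : χ.1 e₀ = e₀)
    -- w^χ = w :
    (hfix : ∀ c z (h : gpd.src c = ξ.proj z) (h' : gpd.src c = ξ.proj (χ.1 z)),
      χ.1.symm (w.w c (χ.1 z) h') = w.w c z h) :
    ∀ z : E, χ.1 z = z := by
  intro z
  obtain ⟨κ, hx⟩ := hloc (ξ.proj z)
  set c := κ.map ⟨ξ.proj z, hx⟩ with hc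
  have hsrc : gpd.src c = ξ.proj z := κ.src_map _
  have htgt : gpd.tgt c = x₀ := κ.tgt_map _
  have hprojχ : ξ.proj (χ.1 z) = ξ.proj z := χ.2.1 z
  have h' : gpd.src c = ξ.proj (χ.1 z) := hsrc.trans hprojχ.symm
  obtain ⟨τ, hτ⟩ := ξ.exists_smul_eq (χ.1 z) z hprojχ
  obtain ⟨g, hg⟩ := ξ.exists_smul_eq (w.w c z hsrc) e₀
    (by rw [w.proj_w, htgt, he₀])
  have hfixw : χ.1 (w.w c z hsrc) = w.w c z hsrc := by
    rw [← hg, χ.2.2, hχ1]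
  have key := hfix c z hsrc h'
  have key2 : w.w c (χ.1 z) h' = w.w c z hsrc := by
    have h2 := congrArg χ.1 key
    rwa [Homeomorph.apply_symm_apply, hfixw] at h2
  have hsm : ∀ y (h : gpd.src c = ξ.proj y), y = ξ.smul z τ →
      w.w c y h = ξ.smul (w.w c z hsrc) τ := by
    rintro y h rfl
    exact w.w_smul c z τ hsrc h
  have hτ1 : τ = 1 := ξ.free _ _ (by rw [← hsm (χ.1 z) h' hτ.symm, key2])
  rw [← hτ, hτ1, ξ.smul_one]
end

section
/- Let C be a locally trivial X-groupoid and ξ = (p : E → X) a principal G-bundle pointed by ̃* ∈ p⁻¹(*). Let w, w̃ ∈ R(C,ξ) be representations with equal holonomies h^w = h^{w̃}. Then: (i) for every z ∈ E the element χ(z) := w̃(θ⁻¹, w(θ,z)) does not depend on the choice of θ ∈ C_{p(z)}^*; (ii) the resulting map χ : E → E is a gauge transformation belonging to 𝒢₁; and (iii) w̃^χ = w. Consequently two representations with the same holonomy lie in the same 𝒢₁-orbit. -/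
open Set Topology Filter

variable {X C E G : Type*} [TopologicalSpace X] [TopologicalSpace C] [TopologicalSpace E]
  [TopologicalSpace G] [Group G]

section InjbahHelpers

variable {X C E G : Type*} [TopologicalSpace X] [TopologicalSpace C] [TopologicalSpace E]
  [TopologicalSpace G] [Group G]

theorem comp_congr' (gpd : TopGroupoidOver X C) {a a' b b' : C} (ha : a = a') (hb : b = b')
    (h : gpd.src a = gpd.tgt b) (h' : gpd.src a' = gpd.tgt b') :
    gpd.comp a b h = gpd.comp a' b' h' := by subst ha; subst hb; rfl

theorem w_congr' {gpd : TopGroupoidOver X C} {ξ : PrincipalGSpace X E G}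
    (r : GroupoidRep gpd ξ) {c c' : C} {z z' : E} (hc : c = c') (hz : z = z')
    (h : gpd.src c = ξ.proj z) (h' : gpd.src c' = ξ.proj z') :
    r.w c z h = r.w c' z' h' := by subst hc; subst hz; rfl

theorem ginv_unit' (gpd : TopGroupoidOver X C) (x : X) :
    gpd.ginv (gpd.unit x) = gpd.unit x := by
  have h1 : gpd.tgt (gpd.ginv (gpd.unit x)) = x := by rw [gpd.tgt_ginv, gpd.src_unit]
  have h2 : gpd.src (gpd.unit x) = gpd.tgt (gpd.ginv (gpd.unit x)) := by
    rw [h1, gpd.src_unit]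
  have h3 : gpd.src (gpd.unit (gpd.tgt (gpd.ginv (gpd.unit x)))) =
      gpd.tgt (gpd.ginv (gpd.unit x)) := by rw [gpd.src_unit]
  calc gpd.ginv (gpd.unit x)
      = gpd.comp (gpd.unit (gpd.tgt (gpd.ginv (gpd.unit x)))) (gpd.ginv (gpd.unit x)) h3 :=
        (gpd.unit_comp _ h3).symm
    _ = gpd.comp (gpd.unit x) (gpd.ginv (gpd.unit x)) h2 :=
        comp_congr' gpd (by rw [h1]) rfl h3 h2
    _ = gpd.unit (gpd.tgt (gpd.unit x)) := gpd.comp_ginv _ h2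
    _ = gpd.unit x := by rw [gpd.tgt_unit]

theorem w_unit' {gpd : TopGroupoidOver X C} {ξ : PrincipalGSpace X E G}
    (r : GroupoidRep gpd ξ) (x : X) (u : E)
    (h : gpd.src (gpd.unit x) = ξ.proj u) : r.w (gpd.unit x) u h = u := by
  have h2 : gpd.src (gpd.ginv (gpd.unit x)) = ξ.proj (r.w (gpd.unit x) u h) := by
    rw [gpd.src_ginv, r.proj_w]
  have key : r.w (gpd.ginv (gpd.unit x)) (r.w (gpd.unit x) u h) h2 = u := r.w_ginv _ _ h h2
  have h2' : gpd.src (gpd.unit x) = ξ.proj (r.w (gpd.unit x) u h) := by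
    rw [gpd.src_unit, r.proj_w, gpd.tgt_unit]
  have key2 : r.w (gpd.unit x) (r.w (gpd.unit x) u h) h2' = u :=
    (w_congr' r (ginv_unit' gpd x) rfl h2 h2').symm.trans key
  have hcc : gpd.src (gpd.unit x) = gpd.tgt (gpd.unit x) := by rw [gpd.src_unit, gpd.tgt_unit]
  have hcu : gpd.src (gpd.unit x) = gpd.tgt (gpd.unit (gpd.src (gpd.unit x))) := by
    rw [gpd.tgt_unit]
  have hcomp : gpd.comp (gpd.unit x) (gpd.unit x) hcc = gpd.unit x :=
    (comp_congr' gpd rfl (by rw [gpd.src_unit]) hcc hcu).trans (gpd.comp_unit (gpd.unit x) hcu)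
  have hsc : gpd.src (gpd.comp (gpd.unit x) (gpd.unit x) hcc) = ξ.proj u := by
    rw [gpd.src_comp]; exact h
  have hw : r.w (gpd.comp (gpd.unit x) (gpd.unit x) hcc) u hsc
      = r.w (gpd.unit x) (r.w (gpd.unit x) u h) h2' := r.w_comp _ _ _ hcc h hsc h2'
  exact (w_congr' r hcomp.symm rfl h hsc).trans (hw.trans key2)

theorem w_inv_right' {gpd : TopGroupoidOver X C} {ξ : PrincipalGSpace X E G}
    (r : GroupoidRep gpd ξ) (c : C) (u : E)
    (h' : gpd.src (gpd.ginv c) = ξ.proj u)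
    (h : gpd.src c = ξ.proj (r.w (gpd.ginv c) u h')) :
    r.w c (r.w (gpd.ginv c) u h') h = u := by
  have hcg : gpd.src c = gpd.tgt (gpd.ginv c) := (gpd.tgt_ginv c).symm
  have h1 : gpd.src (gpd.comp c (gpd.ginv c) hcg) = ξ.proj u := by
    rw [gpd.src_comp]; exact h'
  have hw := r.w_comp c (gpd.ginv c) u hcg h' h1 h
  have h1' : gpd.src (gpd.unit (gpd.tgt c)) = ξ.proj u := by
    rw [gpd.src_unit, ← gpd.src_ginv]; exact h'
  calc r.w c (r.w (gpd.ginv c) u h') h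
      = r.w (gpd.comp c (gpd.ginv c) hcg) u h1 := hw.symm
    _ = r.w (gpd.unit (gpd.tgt c)) u h1' := w_congr' r (gpd.comp_ginv c hcg) rfl h1 h1'
    _ = u := w_unit' r _ u h1'

theorem heqFiber' {gpd : TopGroupoidOver X C} {ξ : PrincipalGSpace X E G} {x₀ : X}
    {e₀ : E} (he₀ : ξ.proj e₀ = x₀) {u v : GroupoidRep gpd ξ}
    (hequv : ∀ (c : OmegaGp gpd x₀) (h h' : gpd.src c.1 = ξ.proj e₀),
      u.w c.1 e₀ h = v.w c.1 e₀ h')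
    (c : C) (hcs : gpd.src c = x₀) (hct : gpd.tgt c = x₀) (y : E) (hy : ξ.proj y = x₀)
    (h h' : gpd.src c = ξ.proj y) : u.w c y h = v.w c y h' := by
  obtain ⟨g, hg⟩ := ξ.exists_smul_eq y e₀ (by rw [hy, he₀])
  subst hg
  have hs : gpd.src c = ξ.proj e₀ := by rw [he₀]; exact hcs
  rw [u.w_smul c e₀ g hs h, v.w_smul c e₀ g hs h', hequv ⟨c, hcs, hct⟩ hs hs]

theorem indep' {gpd : TopGroupoidOver X C} {ξ : PrincipalGSpace X E G} {x₀ : X}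
    {e₀ : E} (he₀ : ξ.proj e₀ = x₀) {u v : GroupoidRep gpd ξ}
    (hequv : ∀ (c : OmegaGp gpd x₀) (h h' : gpd.src c.1 = ξ.proj e₀),
      u.w c.1 e₀ h = v.w c.1 e₀ h')
    (z : E) (θ θ' : C)
    (hθs : gpd.src θ = ξ.proj z) (hθt : gpd.tgt θ = x₀)
    (hθ's : gpd.src θ' = ξ.proj z) (hθ't : gpd.tgt θ' = x₀)
    (h₂ : gpd.src (gpd.ginv θ) = ξ.proj (u.w θ z hθs))
    (h₂' : gpd.src (gpd.ginv θ') = ξ.proj (u.w θ' z hθ's)) :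
    v.w (gpd.ginv θ) (u.w θ z hθs) h₂ = v.w (gpd.ginv θ') (u.w θ' z hθ's) h₂' := by
  have hpa : ξ.proj (v.w (gpd.ginv θ) (u.w θ z hθs) h₂) = ξ.proj z := by
    rw [v.proj_w, gpd.tgt_ginv, hθs]
  have hpb : ξ.proj (v.w (gpd.ginv θ') (u.w θ' z hθ's) h₂') = ξ.proj z := by
    rw [v.proj_w, gpd.tgt_ginv, hθ's]
  have hsa : gpd.src θ' = ξ.proj (v.w (gpd.ginv θ) (u.w θ z hθs) h₂) := by
    rw [hpa]; exact hθ's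
  have hsb : gpd.src θ' = ξ.proj (v.w (gpd.ginv θ') (u.w θ' z hθ's) h₂') := by
    rw [hpb]; exact hθ's
  -- b side
  have hb : v.w θ' (v.w (gpd.ginv θ') (u.w θ' z hθ's) h₂') hsb = u.w θ' z hθ's :=
    w_inv_right' v θ' _ h₂' hsb
  -- a side
  have hc : gpd.src θ' = gpd.tgt (gpd.ginv θ) := by rw [gpd.tgt_ginv, hθs]; exact hθ's
  have hcs : gpd.src (gpd.comp θ' (gpd.ginv θ) hc) = ξ.proj (u.w θ z hθs) := by
    rw [gpd.src_comp]; exact h₂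
  have hcompw := v.w_comp θ' (gpd.ginv θ) (u.w θ z hθs) hc h₂ hcs hsa
  have hloopS : gpd.src (gpd.comp θ' (gpd.ginv θ) hc) = x₀ := by
    rw [gpd.src_comp, gpd.src_ginv]; exact hθt
  have hloopT : gpd.tgt (gpd.comp θ' (gpd.ginv θ) hc) = x₀ := by
    rw [gpd.tgt_comp]; exact hθ't
  have hyp : ξ.proj (u.w θ z hθs) = x₀ := by rw [u.proj_w]; exact hθt
  have hfib : u.w (gpd.comp θ' (gpd.ginv θ) hc) (u.w θ z hθs) hcs
      = v.w (gpd.comp θ' (gpd.ginv θ) hc) (u.w θ z hθs) hcs :=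
    heqFiber' he₀ hequv _ hloopS hloopT _ hyp hcs hcs
  have hcompu := u.w_comp θ' (gpd.ginv θ) (u.w θ z hθs) hc h₂ hcs
    (by rw [u.proj_w, gpd.tgt_ginv, hθs]; exact hθ's)
  have hginvu : u.w (gpd.ginv θ) (u.w θ z hθs) h₂ = z := u.w_ginv θ z hθs h₂
  have ha : v.w θ' (v.w (gpd.ginv θ) (u.w θ z hθs) h₂) hsa = u.w θ' z hθ's := by
    rw [← hcompw, ← hfib, hcompu]
    exact w_congr' u rfl hginvu _ hθ's
  -- cancel
  have hga : gpd.src (gpd.ginv θ') =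
      ξ.proj (v.w θ' (v.w (gpd.ginv θ) (u.w θ z hθs) h₂) hsa) := by
    rw [gpd.src_ginv, v.proj_w]
  have hgb : gpd.src (gpd.ginv θ') =
      ξ.proj (v.w θ' (v.w (gpd.ginv θ') (u.w θ' z hθ's) h₂') hsb) := by
    rw [gpd.src_ginv, v.proj_w]
  calc v.w (gpd.ginv θ) (u.w θ z hθs) h₂
      = v.w (gpd.ginv θ') (v.w θ' (v.w (gpd.ginv θ) (u.w θ z hθs) h₂) hsa) hga :=
        (v.w_ginv θ' _ hsa hga).symm
    _ = v.w (gpd.ginv θ') (v.w θ' (v.w (gpd.ginv θ') (u.w θ' z hθ's) h₂') hsb) hgb :=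
        w_congr' v rfl (ha.trans hb.symm) hga hgb
    _ = v.w (gpd.ginv θ') (u.w θ' z hθ's) h₂' := v.w_ginv θ' _ hsb hgb

end InjbahHelpers

section ChiHelpers

variable {X C E G : Type*} [TopologicalSpace X] [TopologicalSpace C] [TopologicalSpace E]
  [TopologicalSpace G] [Group G]

/-- The candidate gauge transformation `z ↦ v(θ⁻¹, u(θ, z))`, using a fixed selection
`θof x ∈ C_x^{x₀}` of groupoid elements. -/
def chiMap (gpd : TopGroupoidOver X C) (ξ : PrincipalGSpace X E G)
    (θof : X → C) (hs : ∀ x, gpd.src (θof x) = x)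
    (u v : GroupoidRep gpd ξ) (z : E) : E :=
  v.w (gpd.ginv (θof (ξ.proj z))) (u.w (θof (ξ.proj z)) z (hs _))
    ((gpd.src_ginv _).trans (u.proj_w _ _ _).symm)

theorem chi_spec {gpd : TopGroupoidOver X C} {ξ : PrincipalGSpace X E G} {x₀ : X}
    (θof : X → C) (hs : ∀ x, gpd.src (θof x) = x) (ht : ∀ x, gpd.tgt (θof x) = x₀)
    {u v : GroupoidRep gpd ξ} {e₀ : E} (he₀ : ξ.proj e₀ = x₀)
    (hequv : ∀ (c : OmegaGp gpd x₀) (h h' : gpd.src c.1 = ξ.proj e₀),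
      u.w c.1 e₀ h = v.w c.1 e₀ h')
    (z : E) (θ : C) (hθs : gpd.src θ = ξ.proj z) (hθt : gpd.tgt θ = x₀)
    (h₂ : gpd.src (gpd.ginv θ) = ξ.proj (u.w θ z hθs)) :
    chiMap gpd ξ θof hs u v z = v.w (gpd.ginv θ) (u.w θ z hθs) h₂ :=
  indep' he₀ hequv z (θof (ξ.proj z)) θ (hs _) (ht _) hθs hθt _ h₂

theorem chi_proj {gpd : TopGroupoidOver X C} {ξ : PrincipalGSpace X E G}
    (θof : X → C) (hs : ∀ x, gpd.src (θof x) = x)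
    (u v : GroupoidRep gpd ξ) (z : E) :
    ξ.proj (chiMap gpd ξ θof hs u v z) = ξ.proj z := by
  show ξ.proj (v.w _ _ _) = _
  rw [v.proj_w, gpd.tgt_ginv, hs]

theorem chi_smul {gpd : TopGroupoidOver X C} {ξ : PrincipalGSpace X E G} {x₀ : X}
    (θof : X → C) (hs : ∀ x, gpd.src (θof x) = x) (ht : ∀ x, gpd.tgt (θof x) = x₀)
    {u v : GroupoidRep gpd ξ} {e₀ : E} (he₀ : ξ.proj e₀ = x₀)
    (hequv : ∀ (c : OmegaGp gpd x₀) (h h' : gpd.src c.1 = ξ.proj e₀),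
      u.w c.1 e₀ h = v.w c.1 e₀ h')
    (z : E) (g : G) :
    chiMap gpd ξ θof hs u v (ξ.smul z g) = ξ.smul (chiMap gpd ξ θof hs u v z) g := by
  have h1 : gpd.src (θof (ξ.proj z)) = ξ.proj (ξ.smul z g) := by
    rw [ξ.proj_smul]; exact hs _
  have h2 : gpd.src (θof (ξ.proj z)) = ξ.proj z := hs _
  have h₂ : gpd.src (gpd.ginv (θof (ξ.proj z)))
      = ξ.proj (u.w (θof (ξ.proj z)) (ξ.smul z g) h1) := by
    rw [gpd.src_ginv, u.proj_w]
  have h₂' : gpd.src (gpd.ginv (θof (ξ.proj z)))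
      = ξ.proj (ξ.smul (u.w (θof (ξ.proj z)) z h2) g) := by
    rw [ξ.proj_smul, gpd.src_ginv, u.proj_w]
  have h₂'' : gpd.src (gpd.ginv (θof (ξ.proj z)))
      = ξ.proj (u.w (θof (ξ.proj z)) z h2) := by
    rw [gpd.src_ginv, u.proj_w]
  calc chiMap gpd ξ θof hs u v (ξ.smul z g)
      = v.w (gpd.ginv (θof (ξ.proj z))) (u.w (θof (ξ.proj z)) (ξ.smul z g) h1) h₂ :=
        chi_spec θof hs ht he₀ hequv _ _ h1 (ht _) h₂
    _ = v.w (gpd.ginv (θof (ξ.proj z))) (ξ.smul (u.w (θof (ξ.proj z)) z h2) g) h₂' :=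
        w_congr' v rfl (u.w_smul _ z g h2 h1) h₂ h₂'
    _ = ξ.smul (v.w (gpd.ginv (θof (ξ.proj z))) (u.w (θof (ξ.proj z)) z h2) h₂'') g :=
        v.w_smul _ _ g h₂'' h₂'
    _ = ξ.smul (chiMap gpd ξ θof hs u v z) g := rfl

theorem chi_inv {gpd : TopGroupoidOver X C} {ξ : PrincipalGSpace X E G} {x₀ : X}
    (θof : X → C) (hs : ∀ x, gpd.src (θof x) = x) (ht : ∀ x, gpd.tgt (θof x) = x₀)
    {u v : GroupoidRep gpd ξ} {e₀ : E} (he₀ : ξ.proj e₀ = x₀)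
    (hequv : ∀ (c : OmegaGp gpd x₀) (h h' : gpd.src c.1 = ξ.proj e₀),
      u.w c.1 e₀ h = v.w c.1 e₀ h')
    (heqvu : ∀ (c : OmegaGp gpd x₀) (h h' : gpd.src c.1 = ξ.proj e₀),
      v.w c.1 e₀ h = u.w c.1 e₀ h')
    (z : E) :
    chiMap gpd ξ θof hs v u (chiMap gpd ξ θof hs u v z) = z := by
  have hθs : gpd.src (θof (ξ.proj z)) = ξ.proj z := hs _
  have h1 : gpd.src (θof (ξ.proj z)) = ξ.proj (chiMap gpd ξ θof hs u v z) := by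
    rw [chi_proj]; exact hθs
  have hg1 : gpd.src (gpd.ginv (θof (ξ.proj z)))
      = ξ.proj (v.w (θof (ξ.proj z)) (chiMap gpd ξ θof hs u v z) h1) := by
    rw [gpd.src_ginv, v.proj_w]
  rw [chi_spec θof hs ht he₀ heqvu (chiMap gpd ξ θof hs u v z) (θof (ξ.proj z)) h1 (ht _) hg1]
  have h2 : v.w (θof (ξ.proj z)) (chiMap gpd ξ θof hs u v z) h1
      = u.w (θof (ξ.proj z)) z hθs := by
    have := w_inv_right' v (θof (ξ.proj z)) (u.w (θof (ξ.proj z)) z (hs _))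
      ((gpd.src_ginv _).trans (u.proj_w _ _ _).symm) h1
    exact this.trans (w_congr' u rfl rfl _ hθs)
  have hg2 : gpd.src (gpd.ginv (θof (ξ.proj z)))
      = ξ.proj (u.w (θof (ξ.proj z)) z hθs) := by rw [gpd.src_ginv, u.proj_w]
  rw [w_congr' u rfl h2 hg1 hg2]
  exact u.w_ginv _ z hθs hg2

end ChiHelpers

section ChiHelpers2

variable {X C E G : Type*} [TopologicalSpace X] [TopologicalSpace C] [TopologicalSpace E]
  [TopologicalSpace G] [Group G]

theorem chi_fix {gpd : TopGroupoidOver X C} {ξ : PrincipalGSpace X E G} {x₀ : X}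
    (θof : X → C) (hs : ∀ x, gpd.src (θof x) = x) (ht : ∀ x, gpd.tgt (θof x) = x₀)
    {u v : GroupoidRep gpd ξ} {e₀ : E} (he₀ : ξ.proj e₀ = x₀)
    (hequv : ∀ (c : OmegaGp gpd x₀) (h h' : gpd.src c.1 = ξ.proj e₀),
      u.w c.1 e₀ h = v.w c.1 e₀ h') :
    chiMap gpd ξ θof hs u v e₀ = e₀ := by
  have hθs : gpd.src (gpd.unit x₀) = ξ.proj e₀ := by rw [gpd.src_unit, he₀]
  have h₂ : gpd.src (gpd.ginv (gpd.unit x₀)) = ξ.proj (u.w (gpd.unit x₀) e₀ hθs) := by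
    rw [gpd.src_ginv, u.proj_w]
  rw [chi_spec θof hs ht he₀ hequv e₀ (gpd.unit x₀) hθs (gpd.tgt_unit x₀) h₂]
  have h₂' : gpd.src (gpd.unit x₀) = ξ.proj e₀ := hθs
  have h₂'' : gpd.src (gpd.unit x₀) = ξ.proj (u.w (gpd.unit x₀) e₀ hθs) := by
    rw [gpd.src_unit, u.proj_w, gpd.tgt_unit]
  calc v.w (gpd.ginv (gpd.unit x₀)) (u.w (gpd.unit x₀) e₀ hθs) h₂
      = v.w (gpd.unit x₀) e₀ h₂' :=
        w_congr' v (ginv_unit' gpd x₀) (w_unit' u x₀ e₀ hθs) h₂ h₂'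
    _ = e₀ := w_unit' v x₀ e₀ h₂'

theorem chi_w {gpd : TopGroupoidOver X C} {ξ : PrincipalGSpace X E G} {x₀ : X}
    (θof : X → C) (hs : ∀ x, gpd.src (θof x) = x) (ht : ∀ x, gpd.tgt (θof x) = x₀)
    {u v : GroupoidRep gpd ξ} {e₀ : E} (he₀ : ξ.proj e₀ = x₀)
    (hequv : ∀ (c : OmegaGp gpd x₀) (h h' : gpd.src c.1 = ξ.proj e₀),
      u.w c.1 e₀ h = v.w c.1 e₀ h')
    (c : C) (z : E) (h : gpd.src c = ξ.proj z)
    (h' : gpd.src c = ξ.proj (chiMap gpd ξ θof hs u v z)) :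
    chiMap gpd ξ θof hs u v (u.w c z h) = v.w c (chiMap gpd ξ θof hs u v z) h' := by
  set θ := θof (ξ.proj z) with hθdef
  have hθs : gpd.src θ = ξ.proj z := hs _
  have hθt : gpd.tgt θ = x₀ := ht _
  have hθc : gpd.src θ = gpd.tgt (gpd.ginv c) := by
    rw [gpd.tgt_ginv]; exact hθs.trans h.symm
  have hθ₂s : gpd.src (gpd.comp θ (gpd.ginv c) hθc) = ξ.proj (u.w c z h) := by
    rw [gpd.src_comp, gpd.src_ginv, u.proj_w]
  have hθ₂t : gpd.tgt (gpd.comp θ (gpd.ginv c) hθc) = x₀ := by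
    rw [gpd.tgt_comp]; exact hθt
  have h₂ : gpd.src (gpd.ginv (gpd.comp θ (gpd.ginv c) hθc))
      = ξ.proj (u.w (gpd.comp θ (gpd.ginv c) hθc) (u.w c z h) hθ₂s) := by
    rw [gpd.src_ginv, u.proj_w]
  rw [chi_spec θof hs ht he₀ hequv (u.w c z h) (gpd.comp θ (gpd.ginv c) hθc) hθ₂s hθ₂t h₂]
  -- simplify the inner `u`-part
  have hgc : gpd.src (gpd.ginv c) = ξ.proj (u.w c z h) := by rw [gpd.src_ginv, u.proj_w]
  have hθgc : gpd.src θ = ξ.proj (u.w (gpd.ginv c) (u.w c z h) hgc) := by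
    rw [u.proj_w, gpd.tgt_ginv]; exact hθs.trans h.symm
  have e1 : u.w (gpd.comp θ (gpd.ginv c) hθc) (u.w c z h) hθ₂s = u.w θ z hθs := by
    rw [u.w_comp θ (gpd.ginv c) (u.w c z h) hθc hgc hθ₂s hθgc]
    exact w_congr' u rfl (u.w_ginv c z h hgc) hθgc hθs
  -- work on the right-hand side
  have hYp : gpd.src (gpd.comp θ (gpd.ginv c) hθc)
      = ξ.proj (v.w c (chiMap gpd ξ θof hs u v z) h') := by
    rw [gpd.src_comp, gpd.src_ginv, v.proj_w]
  have hgcv : gpd.src (gpd.ginv c) = ξ.proj (v.w c (chiMap gpd ξ θof hs u v z) h') := by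
    rw [gpd.src_ginv, v.proj_w]
  have hθchi : gpd.src θ = ξ.proj (chiMap gpd ξ θof hs u v z) := by
    rw [chi_proj]; exact hθs
  have e2 : v.w (gpd.comp θ (gpd.ginv c) hθc) (v.w c (chiMap gpd ξ θof hs u v z) h') hYp
      = u.w θ z hθs := by
    rw [v.w_comp θ (gpd.ginv c) _ hθc hgcv hYp
      (by rw [v.proj_w, gpd.tgt_ginv]; exact hθs.trans h.symm)]
    have hback : v.w (gpd.ginv c) (v.w c (chiMap gpd ξ θof hs u v z) h') hgcv
        = chiMap gpd ξ θof hs u v z := v.w_ginv c _ h' hgcv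
    rw [w_congr' v rfl hback _ hθchi]
    -- v.w θ (chiMap u v z) hθchi = u.w θ z hθs
    have := w_inv_right' v θ (u.w θ z (hs _))
      ((gpd.src_ginv _).trans (u.proj_w _ _ _).symm) hθchi
    exact this.trans (w_congr' u rfl rfl _ hθs)
  have hgY : gpd.src (gpd.ginv (gpd.comp θ (gpd.ginv c) hθc))
      = ξ.proj (v.w (gpd.comp θ (gpd.ginv c) hθc)
          (v.w c (chiMap gpd ξ θof hs u v z) h') hYp) := by
    rw [gpd.src_ginv, v.proj_w]
  calc v.w (gpd.ginv (gpd.comp θ (gpd.ginv c) hθc))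
        (u.w (gpd.comp θ (gpd.ginv c) hθc) (u.w c z h) hθ₂s) h₂
      = v.w (gpd.ginv (gpd.comp θ (gpd.ginv c) hθc))
          (v.w (gpd.comp θ (gpd.ginv c) hθc)
            (v.w c (chiMap gpd ξ θof hs u v z) h') hYp) hgY :=
        w_congr' v rfl (e1.trans e2.symm) h₂ hgY
    _ = v.w c (chiMap gpd ξ θof hs u v z) h' := v.w_ginv _ _ hYp hgY

end ChiHelpers2

section ChiHelpers3

variable {X C E G : Type*} [TopologicalSpace X] [TopologicalSpace C] [TopologicalSpace E]
  [TopologicalSpace G] [Group G]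

theorem chi_cont {gpd : TopGroupoidOver X C} {ξ : PrincipalGSpace X E G} {x₀ : X}
    (hloc : gpd.LocTrivial x₀)
    (θof : X → C) (hs : ∀ x, gpd.src (θof x) = x) (ht : ∀ x, gpd.tgt (θof x) = x₀)
    {u v : GroupoidRep gpd ξ} {e₀ : E} (he₀ : ξ.proj e₀ = x₀)
    (hequv : ∀ (c : OmegaGp gpd x₀) (h h' : gpd.src c.1 = ξ.proj e₀),
      u.w c.1 e₀ h = v.w c.1 e₀ h') :
    Continuous (chiMap gpd ξ θof hs u v) := by
  rw [continuous_iff_continuousAt]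
  intro z₀
  obtain ⟨κ, hz₀⟩ := hloc (ξ.proj z₀)
  have hopen : IsOpen (ξ.proj ⁻¹' κ.U) := κ.isOpen.preimage ξ.continuous_proj
  apply ContinuousOn.continuousAt _ (hopen.mem_nhds hz₀)
  rw [continuousOn_iff_continuous_restrict]
  -- the local continuous formula
  have hθ : Continuous (fun z : ↥(ξ.proj ⁻¹' κ.U) => κ.map ⟨ξ.proj z.1, z.2⟩) :=
    κ.continuous_map.comp
      (Continuous.subtype_mk (ξ.continuous_proj.comp continuous_subtype_val) _)
  have hq1 : Continuous (fun z : ↥(ξ.proj ⁻¹' κ.U) =>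
      (⟨(κ.map ⟨ξ.proj z.1, z.2⟩, z.1), κ.src_map _⟩ :
        {q : C × E // gpd.src q.1 = ξ.proj q.2})) :=
    Continuous.subtype_mk (hθ.prodMk continuous_subtype_val) _
  have h1 : Continuous (fun z : ↥(ξ.proj ⁻¹' κ.U) =>
      u.w (κ.map ⟨ξ.proj z.1, z.2⟩) z.1 (κ.src_map _)) :=
    u.continuous_w.comp hq1
  have hq2 : Continuous (fun z : ↥(ξ.proj ⁻¹' κ.U) =>
      (⟨(gpd.ginv (κ.map ⟨ξ.proj z.1, z.2⟩),
          u.w (κ.map ⟨ξ.proj z.1, z.2⟩) z.1 (κ.src_map _)),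
        (gpd.src_ginv _).trans (u.proj_w _ _ _).symm⟩ :
        {q : C × E // gpd.src q.1 = ξ.proj q.2})) :=
    Continuous.subtype_mk ((gpd.continuous_ginv.comp hθ).prodMk h1) _
  have hF : Continuous (fun z : ↥(ξ.proj ⁻¹' κ.U) =>
      v.w (gpd.ginv (κ.map ⟨ξ.proj z.1, z.2⟩))
        (u.w (κ.map ⟨ξ.proj z.1, z.2⟩) z.1 (κ.src_map _))
        ((gpd.src_ginv _).trans (u.proj_w _ _ _).symm)) :=
    v.continuous_w.comp hq2
  have hrestr : Set.restrict (ξ.proj ⁻¹' κ.U) (chiMap gpd ξ θof hs u v)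
      = fun z : ↥(ξ.proj ⁻¹' κ.U) =>
        v.w (gpd.ginv (κ.map ⟨ξ.proj z.1, z.2⟩))
          (u.w (κ.map ⟨ξ.proj z.1, z.2⟩) z.1 (κ.src_map _))
          ((gpd.src_ginv _).trans (u.proj_w _ _ _).symm) := by
    funext z
    exact chi_spec θof hs ht he₀ hequv z.1 (κ.map ⟨ξ.proj z.1, z.2⟩)
      (κ.src_map _) (κ.tgt_map _) _
  show Continuous (Set.restrict (ξ.proj ⁻¹' κ.U) (chiMap gpd ξ θof hs u v))
  rw [hrestr]
  exact hF

end ChiHelpers3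

/-- **(injbah1)**. Two representations of a locally trivial `X`-groupoid on a pointed
principal `G`-bundle with the same holonomy lie in the same `𝒢₁`-orbit: the formula
`χ(z) := w̃(θ⁻¹, w(θ,z))` (for any `θ ∈ C_{p(z)}^*`) is independent of `θ` and defines a
gauge transformation `χ ∈ 𝒢₁` with `w̃^χ = w`. -/
theorem statement16 {X C E G : Type*} [TopologicalSpace X] [TopologicalSpace C]
    [TopologicalSpace E] [TopologicalSpace G] [Group G] [IsTopologicalGroup G]
    (gpd : TopGroupoidOver X C) (x₀ : X) (hloc : gpd.LocTrivial x₀)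
    (ξ : PrincipalGSpace X E G) (hbdl : ξ.IsBundle)
    (e₀ : E) (he₀ : ξ.proj e₀ = x₀)
    (w w' : GroupoidRep gpd ξ)
    -- h^w = h^{w̃}
    (heq : ∀ (c : OmegaGp gpd x₀) (h : gpd.src c.1 = ξ.proj e₀)
      (h' : gpd.src c.1 = ξ.proj e₀), w.w c.1 e₀ h = w'.w c.1 e₀ h') :
    -- (i) w̃(θ⁻¹, w(θ,z)) does not depend on the choice of θ ∈ C_{p(z)}^*
    (∀ (z : E) (θ θ' : C)
      (hθs : gpd.src θ = ξ.proj z) (hθt : gpd.tgt θ = x₀)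
      (hθ's : gpd.src θ' = ξ.proj z) (hθ't : gpd.tgt θ' = x₀)
      (h₂ : gpd.src (gpd.ginv θ) = ξ.proj (w.w θ z hθs))
      (h₂' : gpd.src (gpd.ginv θ') = ξ.proj (w.w θ' z hθ's)),
      w'.w (gpd.ginv θ) (w.w θ z hθs) h₂ = w'.w (gpd.ginv θ') (w.w θ' z hθ's) h₂') ∧
    -- (ii) and (iii): the resulting map is a gauge transformation χ ∈ 𝒢₁ with w̃^χ = w
    (∃ χ : GaugeGp ξ,
      χ.1 e₀ = e₀ ∧
      (∀ (z : E) (θ : C) (hθs : gpd.src θ = ξ.proj z) (hθt : gpd.tgt θ = x₀)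
        (h₂ : gpd.src (gpd.ginv θ) = ξ.proj (w.w θ z hθs)),
        χ.1 z = w'.w (gpd.ginv θ) (w.w θ z hθs) h₂) ∧
      (∀ (c : C) (z : E) (h : gpd.src c = ξ.proj z) (h' : gpd.src c = ξ.proj (χ.1 z)),
        χ.1.symm (w'.w c (χ.1 z) h') = w.w c z h)) := by
  have heq' : ∀ (c : OmegaGp gpd x₀) (h h' : gpd.src c.1 = ξ.proj e₀),
      w'.w c.1 e₀ h = w.w c.1 e₀ h' := fun c h h' => (heq c h' h).symm
  have hloc' := hloc
  choose κof hκ using hloc'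
  let θof : X → C := fun x => (κof x).map ⟨x, hκ x⟩
  have hs : ∀ x, gpd.src (θof x) = x := fun x => (κof x).src_map _
  have ht : ∀ x, gpd.tgt (θof x) = x₀ := fun x => (κof x).tgt_map _
  refine ⟨fun z θ θ' hθs hθt hθ's hθ't h₂ h₂' =>
    indep' he₀ heq z θ θ' hθs hθt hθ's hθ't h₂ h₂', ?_⟩
  have hlinv : ∀ z, chiMap gpd ξ θof hs w' w (chiMap gpd ξ θof hs w w' z) = z :=
    chi_inv θof hs ht he₀ heq heq'
  have hrinv : ∀ z, chiMap gpd ξ θof hs w w' (chiMap gpd ξ θof hs w' w z) = z :=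
    chi_inv θof hs ht he₀ heq' heq
  let homeo : E ≃ₜ E :=
    { toFun := chiMap gpd ξ θof hs w w'
      invFun := chiMap gpd ξ θof hs w' w
      left_inv := hlinv
      right_inv := hrinv
      continuous_toFun := chi_cont hloc θof hs ht he₀ heq
      continuous_invFun := chi_cont hloc θof hs ht he₀ heq' }
  refine ⟨⟨homeo, fun z => chi_proj θof hs w w' z,
      fun z g => chi_smul θof hs ht he₀ heq z g⟩, ?_, ?_, ?_⟩
  · exact chi_fix θof hs ht he₀ heq
  · exact fun z θ hθs hθt h₂ => chi_spec θof hs ht he₀ heq z θ hθs hθt h₂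
  · intro c z h h'
    exact (congrArg (fun t => homeo.symm t)
      (chi_w θof hs ht he₀ heq c z h h').symm).trans (homeo.symm_apply_apply _)
end

section
/- Let C be an X-groupoid and ξ = (p : E → X) a principal G-bundle pointed by ̃* ∈ p⁻¹(*). Then the holonomy map h : R(C,ξ) → R(Ω_C,G), sending a representation w to its holonomy h^w, is continuous, where R(C,ξ) carries the compact-open topology (as a subspace of continuous maps C ×_X E → E) and R(Ω_C,G), the set of continuous homomorphisms Ω_C → G, carries the compact-open topology. -/
open Set Topology Filter

variable {X C E G : Type*} [TopologicalSpace X] [TopologicalSpace C] [TopologicalSpace E]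
  [TopologicalSpace G] [Group G]

/-- The set of continuous homomorphisms `Ω_C → G`. -/
def OmegaHom {X C : Type*} [TopologicalSpace X] [TopologicalSpace C]
    (gpd : TopGroupoidOver X C) (x₀ : X) (G : Type*) [TopologicalSpace G] [Group G] :=
  {f : OmegaGp gpd x₀ → G // Continuous f ∧ ∀ a b, f (a * b) = f a * f b}

/-- The compact-open topology on the set of continuous homomorphisms `Ω_C → G`. -/
def omegaHomCO {X C : Type*} [TopologicalSpace X] [TopologicalSpace C]
    (gpd : TopGroupoidOver X C) (x₀ : X) (G : Type*) [TopologicalSpace G] [Group G] :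
    TopologicalSpace (OmegaHom gpd x₀ G) :=
  TopologicalSpace.induced
    (fun f : OmegaHom gpd x₀ G => (⟨f.1, f.2.1⟩ : C(OmegaGp gpd x₀, G))) inferInstance

/-- **(hconti)**. The holonomy map `h : R(C,ξ) → R(Ω_C, G)`, `w ↦ h^w`, is continuous for
the compact-open topologies. -/
theorem statement17 {X C E G : Type*} [TopologicalSpace X] [TopologicalSpace C]
    [TopologicalSpace E] [TopologicalSpace G] [Group G] [IsTopologicalGroup G]
    (gpd : TopGroupoidOver X C) (x₀ : X)
    (ξ : PrincipalGSpace X E G) (hbdl : ξ.IsBundle)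
    (e₀ : E) (he₀ : ξ.proj e₀ = x₀)
    (H : GroupoidRep gpd ξ → OmegaHom gpd x₀ G)
    -- H sends a representation to its holonomy
    (hH : ∀ (w : GroupoidRep gpd ξ) (c : OmegaGp gpd x₀),
      w.w c.1 e₀ (c.2.1.trans he₀.symm) = ξ.smul e₀ ((H w).1 c)) :
    @Continuous _ _ (repCO gpd ξ) (omegaHomCO gpd x₀ G) H := by
  letI tR : TopologicalSpace (GroupoidRep gpd ξ) := repCO gpd ξ
  letI tO : TopologicalSpace (OmegaHom gpd x₀ G) := omegaHomCO gpd x₀ G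
  -- trivialization near x₀
  obtain ⟨U, hUopen, hx₀U, φ, hφ1, hφ2⟩ := hbdl x₀
  have he₀U : ξ.proj e₀ ∈ U := he₀ ▸ hx₀U
  set e₀' : {z : E // ξ.proj z ∈ U} := ⟨e₀, he₀U⟩ with he₀'
  -- the "translation" function γ on the trivialized part
  set γ : {z : E // ξ.proj z ∈ U} → G := fun z => ((φ e₀').2)⁻¹ * (φ z).2 with hγdef
  have hγcont : Continuous γ :=
    continuous_const.mul (continuous_snd.comp φ.continuous)
  have hγ : ∀ (g : G) (hm : ξ.proj (ξ.smul e₀ g) ∈ U), γ ⟨ξ.smul e₀ g, hm⟩ = g := by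
    intro g hm
    have h2 : φ ⟨ξ.smul e₀ g, hm⟩ = ((φ e₀').1, (φ e₀').2 * g) := hφ2 e₀' g hm
    simp only [hγdef, h2, inv_mul_cancel_left]
  -- reduce to compact-open subbasic sets
  apply continuous_induced_rng.2
  rw [ContinuousMap.continuous_compactOpen]
  intro K hK V hV
  -- open set in E corresponding to γ ⁻¹ V
  obtain ⟨W₀, hW₀open, hW₀⟩ : ∃ W₀, IsOpen W₀ ∧ Subtype.val ⁻¹' W₀ = γ ⁻¹' V := by
    have : IsOpen (γ ⁻¹' V) := hV.preimage hγcont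
    rwa [isOpen_induced_iff] at this
  set W : Set E := W₀ ∩ ξ.proj ⁻¹' U with hWdef
  have hWopen : IsOpen W := hW₀open.inter (hUopen.preimage ξ.continuous_proj)
  -- the evaluation-at-e₀ map j : Ω_C → C ×_X E
  set S := {q : C × E // gpd.src q.1 = ξ.proj q.2} with hS
  set j : OmegaGp gpd x₀ → S := fun c => ⟨(c.1, e₀), c.2.1.trans he₀.symm⟩ with hj
  have hjcont : Continuous j :=
    Continuous.subtype_mk (continuous_subtype_val.prodMk continuous_const) _
  have hjK : IsCompact (j '' K) := hK.image hjcont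
  -- the basic open set in C(S, E)
  have hOopen : IsOpen {f : C(S, E) | MapsTo f (j '' K) W} :=
    ContinuousMap.isOpen_setOf_mapsTo hjK hWopen
  have hset : {w : GroupoidRep gpd ξ |
        MapsTo (fun c => (H w).1 c) K V} =
      (fun w : GroupoidRep gpd ξ =>
        (⟨fun q => w.w q.1.1 q.1.2 q.2, w.continuous_w⟩ : C(S, E))) ⁻¹'
      {f : C(S, E) | MapsTo f (j '' K) W} := by
    ext w
    simp only [mem_setOf_eq, mem_preimage, ContinuousMap.coe_mk, mapsTo_image_iff]
    constructor
    · intro hw c hc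
      have hz : w.w c.1 e₀ (c.2.1.trans he₀.symm) = ξ.smul e₀ ((H w).1 c) := hH w c
      have hproj : ξ.proj (w.w c.1 e₀ (c.2.1.trans he₀.symm)) ∈ U := by
        rw [w.proj_w, c.2.2]; exact hx₀U
      refine ⟨?_, hproj⟩
      show w.w c.1 e₀ (c.2.1.trans he₀.symm) ∈ W₀
      have : γ ⟨w.w c.1 e₀ (c.2.1.trans he₀.symm), hproj⟩ ∈ V := by
        have hproj' : ξ.proj (ξ.smul e₀ ((H w).1 c)) ∈ U := hz ▸ hproj
        have : γ ⟨w.w c.1 e₀ (c.2.1.trans he₀.symm), hproj⟩ =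
            γ ⟨ξ.smul e₀ ((H w).1 c), hproj'⟩ := by congr 1; exact Subtype.ext hz
        rw [this, hγ _ hproj']
        exact hw hc
      have := (Set.ext_iff.mp hW₀ ⟨w.w c.1 e₀ (c.2.1.trans he₀.symm), hproj⟩).mpr this
      exact this
    · intro hw c hc
      have hz : w.w c.1 e₀ (c.2.1.trans he₀.symm) = ξ.smul e₀ ((H w).1 c) := hH w c
      have hproj : ξ.proj (w.w c.1 e₀ (c.2.1.trans he₀.symm)) ∈ U := by
        rw [w.proj_w, c.2.2]; exact hx₀U
      have hW0 : w.w c.1 e₀ (c.2.1.trans he₀.symm) ∈ W₀ := (hw hc).1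
      have hγV : γ ⟨w.w c.1 e₀ (c.2.1.trans he₀.symm), hproj⟩ ∈ V :=
        (Set.ext_iff.mp hW₀ ⟨w.w c.1 e₀ (c.2.1.trans he₀.symm), hproj⟩).mp hW0
      have hproj' : ξ.proj (ξ.smul e₀ ((H w).1 c)) ∈ U := hz ▸ hproj
      have heq : γ ⟨w.w c.1 e₀ (c.2.1.trans he₀.symm), hproj⟩ =
          γ ⟨ξ.smul e₀ ((H w).1 c), hproj'⟩ := by congr 1; exact Subtype.ext hz
      rw [heq, hγ _ hproj'] at hγV
      exact hγV
  show IsOpen {w : GroupoidRep gpd ξ | MapsTo (fun c => (H w).1 c) K V}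
  rw [hset]
  exact hOopen.preimage continuous_induced_dom
end

section
/- Let C be a locally trivial X-groupoid with basepoint * ∈ X. Then C is Hausdorff if and only if both X and the group Ω_C are Hausdorff. -/
open Set Topology Filter

variable {X C E G : Type*} [TopologicalSpace X] [TopologicalSpace C] [TopologicalSpace E]
  [TopologicalSpace G] [Group G]

section Aux

variable {X C : Type*} [TopologicalSpace X] [TopologicalSpace C]

theorem gpd_comp_congr (gpd : TopGroupoidOver X C) {a a' b b' : C} (ha : a = a') (hb : b = b')
    (h : gpd.src a = gpd.tgt b) :
    gpd.comp a b h = gpd.comp a' b' (by rw [← ha, ← hb]; exact h) := by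
  subst ha; subst hb; rfl

theorem gpd_cancel_left (gpd : TopGroupoidOver X C) {a b b' : C}
    (h : gpd.src a = gpd.tgt b) (h' : gpd.src a = gpd.tgt b')
    (heq : gpd.comp a b h = gpd.comp a b' h') : b = b' := by
  have key : ∀ (d : C) (hd : gpd.src a = gpd.tgt d),
      gpd.comp (gpd.ginv a) (gpd.comp a d hd)
        (by rw [gpd.src_ginv, gpd.tgt_comp]) = d := by
    intro d hd
    rw [← gpd.comp_assoc (gpd.ginv a) a d (gpd.src_ginv a) hd
        (by rw [gpd.src_comp]; exact hd) (by rw [gpd.src_ginv, gpd.tgt_comp])]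
    rw [gpd_comp_congr gpd (gpd.ginv_comp a (gpd.src_ginv a)) rfl _]
    rw [gpd_comp_congr gpd (congrArg gpd.unit hd) rfl _]
    exact gpd.unit_comp d _
  calc b = gpd.comp (gpd.ginv a) (gpd.comp a b h) _ := (key b h).symm
    _ = gpd.comp (gpd.ginv a) (gpd.comp a b' h') _ := by
        exact gpd_comp_congr gpd rfl heq _
    _ = b' := key b' h'

theorem gpd_cancel_right (gpd : TopGroupoidOver X C) {a b b' : C}
    (h : gpd.src b = gpd.tgt a) (h' : gpd.src b' = gpd.tgt a)
    (heq : gpd.comp b a h = gpd.comp b' a h') : b = b' := by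
  have key : ∀ (d : C) (hd : gpd.src d = gpd.tgt a),
      gpd.comp (gpd.comp d a hd) (gpd.ginv a)
        (by rw [gpd.tgt_ginv, gpd.src_comp]) = d := by
    intro d hd
    rw [gpd.comp_assoc d a (gpd.ginv a) hd (gpd.tgt_ginv a).symm
        (by rw [gpd.tgt_ginv, gpd.src_comp])
        (by rw [gpd.tgt_comp]; exact hd)]
    rw [gpd_comp_congr gpd rfl (gpd.comp_ginv a (gpd.tgt_ginv a).symm) _]
    rw [gpd_comp_congr gpd rfl (congrArg gpd.unit hd.symm) _]
    exact gpd.comp_unit d _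
  calc b = gpd.comp (gpd.comp b a h) (gpd.ginv a) _ := (key b h).symm
    _ = gpd.comp (gpd.comp b' a h') (gpd.ginv a) _ := by
        exact gpd_comp_congr gpd heq rfl _
    _ = b' := key b' h'

/-- The comparison map `d ↦ λ(β d) · d · κ(α d)⁻¹ ∈ Ω` on the open set where it is defined. -/
def contrF (gpd : TopGroupoidOver X C) (x₀ : X) (κ lam : GpdContraction gpd x₀)
    (d : {c : C // gpd.src c ∈ κ.U ∧ gpd.tgt c ∈ lam.U}) : OmegaGp gpd x₀ :=
  ⟨gpd.comp (lam.map ⟨gpd.tgt d.1, d.2.2⟩)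
      (gpd.comp d.1 (gpd.ginv (κ.map ⟨gpd.src d.1, d.2.1⟩))
        (by rw [gpd.tgt_ginv, κ.src_map]))
      (by rw [lam.src_map, gpd.tgt_comp]),
   by rw [gpd.src_comp, gpd.src_comp, gpd.src_ginv, κ.tgt_map],
   by rw [gpd.tgt_comp, lam.tgt_map]⟩

theorem continuous_contrF (gpd : TopGroupoidOver X C) (x₀ : X)
    (κ lam : GpdContraction gpd x₀) : Continuous (contrF gpd x₀ κ lam) := by
  apply Continuous.subtype_mk
  have hval : Continuous fun d : {c : C // gpd.src c ∈ κ.U ∧ gpd.tgt c ∈ lam.U} => d.1 :=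
    continuous_subtype_val
  have hk : Continuous fun d : {c : C // gpd.src c ∈ κ.U ∧ gpd.tgt c ∈ lam.U} =>
      gpd.ginv (κ.map ⟨gpd.src d.1, d.2.1⟩) :=
    gpd.continuous_ginv.comp (κ.continuous_map.comp
      (Continuous.subtype_mk (gpd.continuous_src.comp hval) _))
  have hinner : Continuous fun d : {c : C // gpd.src c ∈ κ.U ∧ gpd.tgt c ∈ lam.U} =>
      gpd.comp d.1 (gpd.ginv (κ.map ⟨gpd.src d.1, d.2.1⟩))
        (by rw [gpd.tgt_ginv, κ.src_map]) := by
    have hpair : Continuous fun d : {c : C // gpd.src c ∈ κ.U ∧ gpd.tgt c ∈ lam.U} =>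
        (⟨(d.1, gpd.ginv (κ.map ⟨gpd.src d.1, d.2.1⟩)),
          by rw [gpd.tgt_ginv, κ.src_map]⟩ : {q : C × C // gpd.src q.1 = gpd.tgt q.2}) :=
      Continuous.subtype_mk (hval.prodMk hk) _
    exact gpd.continuous_comp.comp hpair
  have hl : Continuous fun d : {c : C // gpd.src c ∈ κ.U ∧ gpd.tgt c ∈ lam.U} =>
      lam.map ⟨gpd.tgt d.1, d.2.2⟩ :=
    lam.continuous_map.comp (Continuous.subtype_mk (gpd.continuous_tgt.comp hval) _)
  have hpair2 : Continuous fun d : {c : C // gpd.src c ∈ κ.U ∧ gpd.tgt c ∈ lam.U} =>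
      (⟨(lam.map ⟨gpd.tgt d.1, d.2.2⟩,
          gpd.comp d.1 (gpd.ginv (κ.map ⟨gpd.src d.1, d.2.1⟩))
            (by rw [gpd.tgt_ginv, κ.src_map])),
        by rw [lam.src_map, gpd.tgt_comp]⟩ : {q : C × C // gpd.src q.1 = gpd.tgt q.2}) :=
    Continuous.subtype_mk (hl.prodMk hinner) _
  exact gpd.continuous_comp.comp hpair2

theorem contrF_injOn (gpd : TopGroupoidOver X C) (x₀ : X) (κ lam : GpdContraction gpd x₀)
    {d d' : {c : C // gpd.src c ∈ κ.U ∧ gpd.tgt c ∈ lam.U}}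
    (hs : gpd.src d.1 = gpd.src d'.1) (ht : gpd.tgt d.1 = gpd.tgt d'.1)
    (heq : contrF gpd x₀ κ lam d = contrF gpd x₀ κ lam d') : d = d' := by
  have hval := congrArg Subtype.val heq
  simp only [contrF] at hval
  have hlm : lam.map ⟨gpd.tgt d'.1, d'.2.2⟩ = lam.map ⟨gpd.tgt d.1, d.2.2⟩ :=
    congrArg lam.map (Subtype.ext ht.symm)
  have hkm : κ.map ⟨gpd.src d'.1, d'.2.1⟩ = κ.map ⟨gpd.src d.1, d.2.1⟩ :=
    congrArg κ.map (Subtype.ext hs.symm)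
  rw [gpd_comp_congr gpd hlm (gpd_comp_congr gpd rfl (congrArg gpd.ginv hkm)
      (by rw [gpd.tgt_ginv, κ.src_map])) _] at hval
  have h1 := gpd_cancel_left gpd _ _ hval
  have h2 := gpd_cancel_right gpd _ _ h1
  exact Subtype.ext h2

end Aux

/-- **Lemma (grosep)**. A locally trivial `X`-groupoid `C` is Hausdorff if and only if both
`X` and `Ω_C` are Hausdorff. -/
theorem statement18 {X C : Type*} [TopologicalSpace X] [TopologicalSpace C]
    (gpd : TopGroupoidOver X C) (x₀ : X) (hloc : gpd.LocTrivial x₀) :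
    T2Space C ↔ (T2Space X ∧ T2Space (OmegaGp gpd x₀)) := by
  constructor
  · intro hC
    refine ⟨?_, ?_⟩
    · exact T2Space.of_injective_continuous
        (fun x y hxy => by rw [← gpd.src_unit x, ← gpd.src_unit y, hxy]) gpd.continuous_unit
    · exact T2Space.of_injective_continuous Subtype.coe_injective continuous_subtype_val
  · rintro ⟨hX, hΩ⟩
    constructor
    intro c c' hne
    by_cases hs : gpd.src c = gpd.src c'
    · by_cases ht : gpd.tgt c = gpd.tgt c'
      · -- main case
        obtain ⟨κ, hκ⟩ := hloc (gpd.src c)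
        obtain ⟨lam, hlam⟩ := hloc (gpd.tgt c)
        set s : Set C := {e : C | gpd.src e ∈ κ.U ∧ gpd.tgt e ∈ lam.U} with hsdef
        have hsopen : IsOpen s :=
          (κ.isOpen.preimage gpd.continuous_src).inter (lam.isOpen.preimage gpd.continuous_tgt)
        have hc : c ∈ s := ⟨hκ, hlam⟩
        have hc' : c' ∈ s := ⟨hs ▸ hκ, ht ▸ hlam⟩
        have hFne : contrF gpd x₀ κ lam ⟨c, hc⟩ ≠ contrF gpd x₀ κ lam ⟨c', hc'⟩ := by
          intro h
          exact hne (congrArg Subtype.val (contrF_injOn gpd x₀ κ lam hs ht h))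
        obtain ⟨u, v, hu, hv, hcu, hcv, huv⟩ :=
          separated_by_continuous (continuous_contrF gpd x₀ κ lam) hFne
        refine ⟨Subtype.val '' u, Subtype.val '' v,
          hsopen.isOpenMap_subtype_val u hu, hsopen.isOpenMap_subtype_val v hv,
          ⟨⟨c, hc⟩, hcu, rfl⟩, ⟨⟨c', hc'⟩, hcv, rfl⟩, ?_⟩
        exact Set.disjoint_image_of_injective Subtype.val_injective huv
      · obtain ⟨u, v, hu, hv, hcu, hcv, huv⟩ :=
          separated_by_continuous gpd.continuous_tgt ht
        exact ⟨u, v, hu, hv, hcu, hcv, huv⟩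
    · obtain ⟨u, v, hu, hv, hcu, hcv, huv⟩ :=
        separated_by_continuous gpd.continuous_src hs
      exact ⟨u, v, hu, hv, hcu, hcv, huv⟩
end
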